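/- arXiv:1603.06290 — 7 statements merged into one kernel-verified Lean document; each statement's English description precedes it below -/
import Mathlib

section
/- For integers m ≥ 1 and n ≥ 1 with n not divisible by m+1, write n = (m+1)·ν + r with 0 < r ≤ m. The number of m-Łukasiewicz paths of length n (paths with steps +1 and −m such that every proper prefix has nonnegative height and the full path has negative height) equals (r/n)·C(n, ν). -/
/-- Height of a path: `true` is an up step (+1), `false` is a down step (-m). -/
def height (m : ℕ) (w : List Bool) : ℤ :=
  (w.count true : ℤ) - (m : ℤ) * (w.count false : ℤ)

/-- An m-Łukasiewicz path: every proper prefix has nonnegative height,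
but the full path has negative height. -/
def IsLuka (m : ℕ) (w : List Bool) : Prop :=
  (∀ k < w.length, 0 ≤ height m (w.take k)) ∧ height m w < 0

namespace Luka0

attribute [local instance] Classical.propDecidable

def S (a : ℕ → ℤ) (k : ℕ) : ℤ := ∑ i ∈ Finset.range k, a i

lemma S_succ (a : ℕ → ℤ) (k : ℕ) : S a (k+1) = S a k + a k :=
  Finset.sum_range_succ a k

lemma S_add (a : ℕ → ℤ) (j i : ℕ) :
    S a (j + i) = S a j + ∑ t ∈ Finset.range i, a (j + t) := by
  unfold S; rw [Finset.sum_range_add]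

lemma S_split (a : ℕ → ℤ) {k : ℕ} (hk : 0 < k) : S a k = S a (k-1) + a (k-1) := by
  have h := S_succ a (k-1)
  rwa [show k-1+1 = k by omega] at h

def Good (a : ℕ → ℤ) (j : ℕ) : Prop := ∀ i, 0 < i → S a j < S a (j + i)

section cycle

variable {n r : ℕ} {a : ℕ → ℤ}
variable (hn : 0 < n) (hr : 0 < r)
variable (hper : ∀ k, a (k + n) = a k) (hle : ∀ k, a k ≤ 1)
variable (hsum : S a n = r)

include hper in
lemma S_n_add (k : ℕ) : S a (n + k) = S a n + S a k := by
  rw [S_add]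
  congr 1
  apply Finset.sum_congr rfl
  intro t _
  rw [add_comm n t, hper]

include hper hsum in
lemma S_per (k : ℕ) : S a (n + k) = r + S a k := by
  rw [S_n_add hper, hsum]

include hper hsum in
lemma good_shift (j : ℕ) : Good a (j + n) ↔ Good a j := by
  constructor <;> intro h i hi
  · have := h i hi
    rw [add_comm j n, add_assoc, S_per hper hsum, S_per hper hsum] at this
    linarith
  · have := h i hi
    rw [add_comm j n, add_assoc, S_per hper hsum, S_per hper hsum]
    linarith

include hn hr hper hsum in
lemma good_iff_window (j : ℕ) :
    Good a j ↔ ∀ i, 0 < i → i ≤ n → S a j < S a (j + i) := by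
  constructor
  · intro h i hi _; exact h i hi
  · intro h i hi
    induction i using Nat.strong_induction_on with
    | _ i ih =>
      rcases le_or_gt i n with h1 | h1
      · exact h i hi h1
      · have hin : i - n > 0 := by omega
        have := ih (i - n) (by omega) hin
        have heq : S a (j + i) = r + S a (j + (i - n)) := by
          rw [show j + i = n + (j + (i - n)) by omega, S_per hper hsum]
        rw [heq]
        have : (0:ℤ) < r := by exact_mod_cast hr
        linarith

/-- Number of good indices in the window `[t, t+n)`. -/
noncomputable def GC (n : ℕ) (a : ℕ → ℤ) (t : ℕ) : ℕ :=
  ((Finset.Ico t (t + n)).filter (Good a)).card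

include hper hsum in
lemma GC_succ (t : ℕ) : GC n a t = GC n a (t + 1) := by
  have key : ∀ s : ℕ, ((Finset.Ico s (s+n)).filter (Good a)).card
      = ∑ i ∈ Finset.Ico s (s+n), (if Good a i then 1 else 0) :=
    fun s => Finset.card_filter _ _
  have h1 : ∑ i ∈ Finset.Ico t (t+n+1), (if Good a i then (1:ℕ) else 0)
      = (∑ i ∈ Finset.Ico t (t+n), (if Good a i then 1 else 0)) + (if Good a (t+n) then 1 else 0) :=
    Finset.sum_Ico_succ_top (by omega) _
  have h2 : ∑ i ∈ Finset.Ico t (t+n+1), (if Good a i then (1:ℕ) else 0)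
      = (if Good a t then 1 else 0) + ∑ i ∈ Finset.Ico (t+1) (t+n+1), (if Good a i then 1 else 0) :=
    Finset.sum_eq_sum_Ico_succ_bot (by omega) _
  have h3 : (if Good a (t+n) then (1:ℕ) else 0) = (if Good a t then 1 else 0) := by
    by_cases h : Good a t
    · rw [if_pos h, if_pos ((good_shift hper hsum t).2 h)]
    · rw [if_neg h, if_neg (fun hc => h ((good_shift hper hsum t).1 hc))]
  rw [GC, GC, key, key, show t + 1 + n = t + n + 1 by omega]
  omega

include hper hsum in
lemma GC_all (t : ℕ) : GC n a 0 = GC n a t := by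
  induction t with
  | zero => rfl
  | succ t ih => rw [ih, GC_succ hper hsum]

include hper hsum in
lemma S_ge {k : ℕ} (hk : n ≤ k) : S a k = r + S a (k - n) := by
  have h := S_per hper hsum (k - n)
  rw [show n + (k - n) = k by omega] at h
  exact h

include hn hr hper hle hsum in
/-- The cycle lemma: exactly `r` of the `n` cyclic shifts are "good". -/
theorem cycle_lemma : ((Finset.range n).filter (Good a)).card = r := by
  -- find the last minimum j0 in [0, n)
  have hne : (Finset.range n).Nonempty := ⟨0, Finset.mem_range.2 hn⟩
  set v0 : ℤ := ((Finset.range n).image (S a)).min' (hne.image _) with hv0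
  have hmem : ∀ i < n, v0 ≤ S a i := fun i hi =>
    Finset.min'_le _ _ (Finset.mem_image_of_mem _ (Finset.mem_range.2 hi))
  have hmin_all : ∀ i, v0 ≤ S a i := by
    intro i
    induction i using Nat.strong_induction_on with
    | _ i ih =>
      rcases lt_or_ge i n with h | h
      · exact hmem i h
      · have heq := S_ge hper hsum h
        have h2 := ih (i - n) (by omega)
        have hrp : (0:ℤ) < r := by exact_mod_cast hr
        linarith
  obtain ⟨j0', hj0'mem, hj0'⟩ := Finset.mem_image.1 (((Finset.range n).image (S a)).min'_mem (hne.image _))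
  have hTne : ((Finset.range n).filter (fun j => S a j = v0)).Nonempty :=
    ⟨j0', Finset.mem_filter.2 ⟨hj0'mem, hj0'⟩⟩
  set j0 := ((Finset.range n).filter (fun j => S a j = v0)).max' hTne with hj0def
  have hj0mem := ((Finset.range n).filter (fun j => S a j = v0)).max'_mem hTne
  have hj0n : j0 < n := Finset.mem_range.1 (Finset.mem_filter.1 hj0mem).1
  have hSj0 : S a j0 = v0 := (Finset.mem_filter.1 hj0mem).2
  have hrpos : (0:ℤ) < r := by exact_mod_cast hr
  -- j0 is a strict minimum of everything after it
  have hstrict : ∀ i, j0 < i → v0 < S a i := by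
    intro i hi
    induction i using Nat.strong_induction_on with
    | _ i ih =>
      rcases lt_or_ge i n with h | h
      · rcases lt_or_eq_of_le (hmem i h) with h2 | h2
        · exact h2
        · exfalso
          have : i ≤ j0 := Finset.le_max' _ i (Finset.mem_filter.2 ⟨Finset.mem_range.2 h, h2.symm⟩)
          omega
      · have heq := S_ge hper hsum h
        have := hmin_all (i - n)
        linarith
  -- values ≥ v0 + r after the window
  have htail : ∀ k, j0 + n ≤ k → v0 + r ≤ S a k := by
    intro k hk
    have heq := S_ge hper hsum (show n ≤ k by omega)
    have hk2 : j0 ≤ k - n := by omega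
    rcases lt_or_eq_of_le hk2 with h | h
    · have := hstrict _ h; linarith
    · rw [← h, hSj0] at heq; linarith
  -- the bijection between goods in the window and Ico v0 (v0 + r)
  have hwin : ((Finset.Ico j0 (j0 + n)).filter (Good a)).card
      = (Finset.Ico v0 (v0 + r)).card := by
    apply Finset.card_bij (fun j _ => S a j)
    · -- maps into
      intro j hj
      obtain ⟨hjw, hjg⟩ := Finset.mem_filter.1 hj
      obtain ⟨hj1, hj2⟩ := Finset.mem_Ico.1 hjw
      refine Finset.mem_Ico.2 ⟨?_, ?_⟩
      · rcases lt_or_eq_of_le hj1 with h | h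
        · exact le_of_lt (hstrict j h)
        · rw [← h, hSj0]
      · have := hjg (j0 + n - j) (by omega)
        rw [show j + (j0 + n - j) = j0 + n by omega] at this
        have h2 : S a (j0 + n) = r + S a j0 := by
          rw [show j0 + n = n + j0 by omega, S_per hper hsum]
        rw [h2, hSj0] at this
        linarith
    · -- injective
      intro j hj j' hj' hSS
      by_contra hne2
      obtain ⟨_, hjg⟩ := Finset.mem_filter.1 hj
      obtain ⟨_, hj'g⟩ := Finset.mem_filter.1 hj'
      rcases lt_or_gt_of_ne hne2 with h | h
      · have := hjg (j' - j) (by omega)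
        rw [show j + (j' - j) = j' by omega] at this
        omega
      · have := hj'g (j - j') (by omega)
        rw [show j' + (j - j') = j by omega] at this
        omega
    · -- surjective
      intro v hv
      obtain ⟨hv1, hv2⟩ := Finset.mem_Ico.1 hv
      have hTne2 : ((Finset.Ico j0 (j0 + n)).filter (fun j => S a j ≤ v)).Nonempty :=
        ⟨j0, Finset.mem_filter.2 ⟨Finset.mem_Ico.2 ⟨le_refl _, by omega⟩, by rw [hSj0]; exact hv1⟩⟩
      set j := ((Finset.Ico j0 (j0 + n)).filter (fun j => S a j ≤ v)).max' hTne2 with hjdef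
      have hjmem := ((Finset.Ico j0 (j0 + n)).filter (fun j => S a j ≤ v)).max'_mem hTne2
      obtain ⟨hjw, hjle⟩ := Finset.mem_filter.1 hjmem
      obtain ⟨hjj0, hjlt⟩ := Finset.mem_Ico.1 hjw
      -- everything strictly after j up to j0 + n is > v
      have hkey : ∀ i, j < i → i ≤ j0 + n → v < S a i := by
        intro i hi1 hi2
        rcases lt_or_eq_of_le hi2 with h | h
        · by_contra hc
          push_neg at hc
          have : i ≤ j := Finset.le_max' _ i
            (Finset.mem_filter.2 ⟨Finset.mem_Ico.2 ⟨by omega, h⟩, hc⟩)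
          omega
        · rw [h]; have := htail (j0 + n) (le_refl _); linarith
      -- S a j = v
      have hSj : S a j = v := by
        have h1 := hkey (j + 1) (by omega) (by omega)
        rw [S_succ] at h1
        have h2 := hle j
        linarith
      refine ⟨j, Finset.mem_filter.2 ⟨hjw, ?_⟩, hSj⟩
      -- j is good
      rw [good_iff_window hn hr hper hsum]
      intro i hi1 hi2
      rw [hSj]
      rcases le_or_gt (j + i) (j0 + n) with h | h
      · exact hkey (j + i) (by omega) h
      · have := htail (j + i) (by omega); linarith
  have hcard : (Finset.Ico v0 (v0 + r)).card = r := by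
    rw [Int.card_Ico]; simp
  have : GC n a 0 = GC n a j0 := GC_all hper hsum j0
  rw [GC, GC, zero_add] at this
  rw [Finset.range_eq_Ico, this, hwin, hcard]

end cycle

/-! ### Words -/

section words

variable {m n : ℕ}

def wrap (n : ℕ) (f : Fin n → Bool) (k : ℕ) : Bool :=
  if h : k % n < n then f ⟨k % n, h⟩ else true

def af (m n : ℕ) (f : Fin n → Bool) (k : ℕ) : ℤ :=
  if wrap n f k then 1 else -(m : ℤ)

lemma wrap_congr {f : Fin n → Bool} {k l : ℕ} (h : k % n = l % n) :
    wrap n f k = wrap n f l := by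
  unfold wrap; rw [h]

lemma wrap_eq {f : Fin n → Bool} {k : ℕ} (hk : k < n) :
    wrap n f k = f ⟨k, hk⟩ := by
  unfold wrap
  rw [dif_pos (by exact Nat.mod_lt _ (by omega) : k % n < n)]
  congr 1
  exact Fin.ext (Nat.mod_eq_of_lt hk)

lemma wrap_per (f : Fin n → Bool) (k : ℕ) : wrap n f (k + n) = wrap n f k :=
  wrap_congr (Nat.add_mod_right k n)

lemma af_per (f : Fin n → Bool) (k : ℕ) : af m n f (k + n) = af m n f k := by
  unfold af; rw [wrap_per]

lemma af_le (f : Fin n → Bool) (k : ℕ) : af m n f k ≤ 1 := by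
  unfold af; split
  · exact le_refl 1
  · have : (0:ℤ) ≤ (m:ℤ) := Int.natCast_nonneg m
    linarith

def D (f : Fin n → Bool) : ℕ := (Finset.univ.filter (fun i => f i = false)).card

lemma S_af_n (hn : 0 < n) (f : Fin n → Bool) :
    S (af m n f) n = (n : ℤ) - (m + 1) * (D f : ℤ) := by
  have h1 : S (af m n f) n = ∑ i : Fin n, (if f i then (1:ℤ) else -(m:ℤ)) := by
    rw [S, ← Fin.sum_univ_eq_sum_range (fun i => af m n f i) n]
    apply Finset.sum_congr rfl
    intro i _
    unfold af
    rw [wrap_eq i.isLt]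
  have h2 : ∀ i : Fin n, (if f i then (1:ℤ) else -(m:ℤ))
      = 1 - (if f i = false then ((m:ℤ)+1) else 0) := by
    intro i; cases h : f i <;> simp
  rw [h1, Finset.sum_congr rfl (fun i _ => h2 i), Finset.sum_sub_distrib]
  rw [Finset.sum_const, ← Finset.sum_filter, Finset.sum_const]
  unfold D
  simp [Finset.card_univ, mul_comm]

lemma height_append (m : ℕ) (l l' : List Bool) :
    height m (l ++ l') = height m l + height m l' := by
  unfold height
  rw [List.count_append, List.count_append]
  push_cast
  ring

lemma height_take (f : Fin n → Bool) :
    ∀ k, k ≤ n → height m ((List.ofFn f).take k) = S (af m n f) k := by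
  intro k
  induction k with
  | zero => intro _; simp [height, S]
  | succ k ih =>
    intro hk
    have hkn : k < n := by omega
    rw [List.take_succ, height_append, ih (by omega), S_succ]
    congr 1
    have : (List.ofFn f)[k]? = some (f ⟨k, hkn⟩) := by
      rw [List.getElem?_ofFn]
      simp [List.ofFnNthVal, hkn]
    rw [this]
    unfold af
    rw [wrap_eq hkn]
    cases h : f ⟨k, hkn⟩ <;> simp [height, h]

lemma luka_iff (f : Fin n → Bool) :
    IsLuka m (List.ofFn f) ↔
      (∀ k < n, 0 ≤ S (af m n f) k) ∧ S (af m n f) n < 0 := by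
  have hfull : height m (List.ofFn f) = S (af m n f) n := by
    have h := height_take (m := m) f n (le_refl n)
    rwa [show (List.ofFn f).take n = List.ofFn f from by
      simpa using List.take_length (List.ofFn f)] at h
  unfold IsLuka
  rw [List.length_ofFn, hfull]
  constructor
  · intro ⟨h1, h2⟩
    exact ⟨fun k hk => by rw [← height_take f k (le_of_lt hk)]; exact h1 k hk, h2⟩
  · intro ⟨h1, h2⟩
    exact ⟨fun k hk => by rw [height_take f k (le_of_lt hk)]; exact h1 k hk, h2⟩

/-! ### Rotations -/

def rot (f : Fin n → Bool) (j : ℕ) : Fin n → Bool := fun i => wrap n f ((i : ℕ) + j)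

lemma wrap_rot (hn : 0 < n) (f : Fin n → Bool) (j k : ℕ) :
    wrap n (rot f j) k = wrap n f (k + j) := by
  have hk : k % n < n := Nat.mod_lt _ hn
  have h0 : wrap n (rot f j) k = wrap n (rot f j) (k % n) :=
    wrap_congr (Nat.mod_mod_of_dvd k dvd_rfl).symm
  rw [h0, wrap_eq hk]
  show wrap n f ((k % n) + j) = wrap n f (k + j)
  exact wrap_congr (Nat.mod_add_mod k n j)

lemma af_rot (hn : 0 < n) (f : Fin n → Bool) (j k : ℕ) :
    af m n (rot f j) k = af m n f (k + j) := by
  unfold af; rw [wrap_rot hn]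

lemma S_rot (hn : 0 < n) (f : Fin n → Bool) (j i : ℕ) :
    S (af m n (rot f j)) i = S (af m n f) (j + i) - S (af m n f) j := by
  rw [S_add]
  have : ∀ t, af m n f (j + t) = af m n (rot f j) t := by
    intro t; rw [af_rot hn, add_comm t j]
  rw [Finset.sum_congr rfl (fun t _ => this t)]
  unfold S
  ring

def Pos (m n : ℕ) (g : Fin n → Bool) : Prop :=
  ∀ k, 0 < k → k ≤ n → 0 < S (af m n g) k

variable {r : ℕ}

lemma good_iff_pos (hn : 0 < n) (hr : 0 < r) (f : Fin n → Bool)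
    (hsum : S (af m n f) n = r) (j : ℕ) :
    Good (af m n f) j ↔ Pos m n (rot f j) := by
  rw [good_iff_window hn hr (af_per f) hsum]
  constructor
  · intro h k hk1 hk2
    rw [S_rot hn]
    have := h k hk1 hk2
    linarith
  · intro h i hi1 hi2
    have := h i hi1 hi2
    rw [S_rot hn] at this
    linarith

lemma S_rot_n (hn : 0 < n) (f : Fin n → Bool) (j : ℕ) :
    S (af m n (rot f j)) n = S (af m n f) n := by
  rw [S_rot hn]
  have : S (af m n f) (j + n) = S (af m n f) n + S (af m n f) j := by
    rw [add_comm j n, S_n_add (af_per f)]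
  rw [this]; ring

lemma D_rot (hn : 0 < n) (f : Fin n → Bool) (j : ℕ) : D (rot f j) = D f := by
  have h1 := S_af_n hn (rot f j) (m := 0)
  have h2 := S_af_n hn f (m := 0)
  have h3 := S_rot_n hn f j (m := 0)
  rw [h1, h2] at h3
  have h5 : (D (rot f j) : ℤ) = (D f : ℤ) := by push_cast at h3 ⊢; linarith
  exact_mod_cast h5

lemma rot_rot (hn : 0 < n) (f : Fin n → Bool) (j k : ℕ) :
    rot (rot f j) k = rot f (k + j) := by
  funext i
  show wrap n (rot f j) ((i:ℕ) + k) = wrap n f ((i:ℕ) + (k + j))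
  rw [wrap_rot hn, add_assoc]

lemma rot_n (f : Fin n → Bool) : rot f n = f := by
  funext i
  show wrap n f ((i:ℕ) + n) = f i
  rw [wrap_per, wrap_eq i.isLt]

/-! ### The shift bijection between Łukasiewicz words and positive words -/

def shf (f : Fin n → Bool) : Fin n → Bool :=
  fun i => if (i : ℕ) = 0 then true else wrap n f ((i : ℕ) - 1)

def ush (g : Fin n → Bool) : Fin n → Bool :=
  fun i => if (i : ℕ) = n - 1 then false else wrap n g ((i : ℕ) + 1)

lemma af_shf_zero (hn : 0 < n) (f : Fin n → Bool) : af m n (shf f) 0 = 1 := by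
  have hh : shf f ⟨0, hn⟩ = true := if_pos rfl
  unfold af
  rw [wrap_eq hn, hh]
  simp

lemma af_shf (f : Fin n → Bool) {k : ℕ} (hk1 : 0 < k) (hk2 : k < n) :
    af m n (shf f) k = af m n f (k - 1) := by
  have hh : shf f ⟨k, hk2⟩ = wrap n f (k - 1) := if_neg (show ¬ (k = 0) by omega)
  unfold af
  rw [wrap_eq hk2, hh]

lemma S_shf (f : Fin n → Bool) : ∀ k, k < n →
    S (af m n (shf f)) (k + 1) = 1 + S (af m n f) k := by
  intro k
  induction k with
  | zero =>
    intro h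
    rw [S_succ, af_shf_zero h]
    simp [S]
  | succ k ih =>
    intro h
    rw [S_succ, ih (by omega), af_shf f (by omega) h, S_succ]
    simp
    ring

lemma af_ush (g : Fin n → Bool) {k : ℕ} (hk : k < n - 1) :
    af m n (ush g) k = af m n g (k + 1) := by
  have hh : ush g ⟨k, show k < n by omega⟩ = wrap n g (k + 1) :=
    if_neg (show ¬ (k = n - 1) by omega)
  unfold af
  rw [wrap_eq (show k < n by omega), hh]

lemma af_ush_last (hn : 0 < n) (g : Fin n → Bool) :
    af m n (ush g) (n - 1) = -(m : ℤ) := by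
  have hh : ush g ⟨n - 1, show n - 1 < n by omega⟩ = false := if_pos rfl
  unfold af
  rw [wrap_eq (show n - 1 < n by omega), hh]
  simp

lemma S_ush (g : Fin n → Bool) (hg0 : S (af m n g) 1 = 1) :
    ∀ k, k ≤ n - 1 → S (af m n (ush g)) k = S (af m n g) (k + 1) - 1 := by
  intro k
  induction k with
  | zero =>
    intro _
    rw [hg0]
    simp [S]
  | succ k ih =>
    intro h
    rw [S_succ, ih (by omega), af_ush g (by omega), S_succ (af m n g) (k+1)]
    ring

lemma pos_first (hn : 0 < n) (g : Fin n → Bool) (hg : Pos m n g) :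
    S (af m n g) 1 = 1 := by
  have h1 := hg 1 (by omega) hn
  rw [S_succ] at h1 ⊢
  simp [S] at h1 ⊢
  unfold af at h1 ⊢
  by_cases h : wrap n g 0
  · rw [if_pos h]
  · rw [if_neg h] at h1
    have : (0:ℤ) ≤ (m:ℤ) := Int.natCast_nonneg m
    linarith

lemma af_ge (f : Fin n → Bool) (k : ℕ) : -(m:ℤ) ≤ af m n f k := by
  unfold af; split
  · have : (0:ℤ) ≤ (m:ℤ) := Int.natCast_nonneg m
    linarith
  · exact le_refl _

lemma af_neg_wrap {f : Fin n → Bool} {k : ℕ} (h : af m n f k < 0) :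
    wrap n f k = false := by
  unfold af at h
  by_cases hw : wrap n f k
  · rw [if_pos hw] at h; omega
  · simpa using hw

end words

/-! ### Counting -/

section count

variable {m n ν r : ℕ}
variable (hm : 1 ≤ m) (hn : 1 ≤ n) (hr : 0 < r) (hrm : r ≤ m)
variable (hdiv : n = (m + 1) * ν + r)

include hdiv in
lemma hdivZ : (n : ℤ) = ((m : ℤ) + 1) * (ν : ℤ) + (r : ℤ) := by
  exact_mod_cast congrArg (Nat.cast : ℕ → ℤ) hdiv

include hn hdiv in
lemma sum_of_A {f : Fin n → Bool} (hf : D f = ν) : S (af m n f) n = r := by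
  rw [S_af_n hn f, hf, hdivZ hdiv]
  ring

include hn hr hrm hdiv in
lemma cardA :
    (Finset.univ.filter (fun f : Fin n → Bool => D f = ν)).card = n.choose ν := by
  have h := Finset.card_bij'
    (fun (f : Fin n → Bool) (_ : f ∈ Finset.univ.filter (fun f => D f = ν)) =>
      Finset.univ.filter (fun i => f i = false))
    (fun (s : Finset (Fin n)) (_ : s ∈ Finset.powersetCard ν Finset.univ) =>
      (fun i => decide (i ∉ s)))
    ?_ ?_ ?_ ?_
  · rw [h, Finset.card_powersetCard, Finset.card_univ, Fintype.card_fin]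
  · intro f hf
    rw [Finset.mem_powersetCard_univ]
    exact (Finset.mem_filter.1 hf).2
  · intro s hs
    rw [Finset.mem_filter]
    refine ⟨Finset.mem_univ _, ?_⟩
    unfold D
    have : (Finset.univ.filter (fun i => decide (i ∉ s) = false)) = s := by
      ext i; simp
    rw [this]
    exact (Finset.mem_powersetCard_univ.1 hs)
  · intro f hf
    funext i
    by_cases h : f i <;> simp [h]
  · intro s hs
    ext i; simp

include hm hn hr hrm hdiv in
lemma key12 :
    r * n.choose ν
      = n * ((Finset.univ.filter (fun f : Fin n → Bool => D f = ν)).filter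
          (Pos m n)).card := by
  classical
  set A := Finset.univ.filter (fun f : Fin n → Bool => D f = ν) with hA
  have hnn : 0 < n := hn
  -- key1: each f in A has exactly r good rotations
  have key1 : ∑ f ∈ A, ((Finset.range n).filter (Good (af m n f))).card = r * n.choose ν := by
    rw [Finset.sum_congr rfl (fun f hf => cycle_lemma hnn hr (af_per f) (af_le f)
      (sum_of_A hn hdiv (Finset.mem_filter.1 hf).2))]
    rw [Finset.sum_const, cardA hn hr hrm hdiv, smul_eq_mul, mul_comm]
  -- key2: double counting via sigma
  have key2 : ∑ f ∈ A, ((Finset.range n).filter (Good (af m n f))).card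
      = n * (A.filter (Pos m n)).card := by
    rw [← Finset.card_sigma]
    rw [show n * (A.filter (Pos m n)).card = ((A.filter (Pos m n)) ×ˢ Finset.range n).card by
      rw [Finset.card_product, Finset.card_range]; ring]
    apply Finset.card_bij (fun p _ => (rot p.1 p.2, p.2))
    · rintro ⟨f, j⟩ hp
      obtain ⟨hf, hj⟩ := Finset.mem_sigma.1 hp
      obtain ⟨hjr, hjg⟩ := Finset.mem_filter.1 hj
      have hfA : D f = ν := (Finset.mem_filter.1 hf).2
      rw [Finset.mem_product]
      constructor
      · rw [Finset.mem_filter]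
        refine ⟨Finset.mem_filter.2 ⟨Finset.mem_univ _, ?_⟩, ?_⟩
        · rw [D_rot hnn, hfA]
        · exact (good_iff_pos hnn hr f (sum_of_A hn hdiv hfA) j).1 hjg
      · exact hjr
    · rintro ⟨f, j⟩ hp ⟨f', j'⟩ hp' heq
      obtain ⟨h1, h2⟩ := Prod.mk.injEq _ _ _ _ ▸ heq
      have hj : j < n := Finset.mem_range.1 (Finset.mem_filter.1 (Finset.mem_sigma.1 hp).2).1
      subst h2
      have : f = f' := by
        have h3 := congrArg (fun h => rot h (n - j)) h1
        simp only at h3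
        rw [rot_rot hnn, rot_rot hnn, show n - j + j = n by omega, rot_n, rot_n] at h3
        exact h3
      subst this
      rfl
    · rintro ⟨g, j⟩ hb
      obtain ⟨hg, hj⟩ := Finset.mem_product.1 hb
      obtain ⟨hgA, hgP⟩ := Finset.mem_filter.1 hg
      have hgν : D g = ν := (Finset.mem_filter.1 hgA).2
      have hjn : j < n := Finset.mem_range.1 hj
      have hDr : D (rot g (n - j)) = ν := by rw [D_rot hnn, hgν]
      have hback : rot (rot g (n - j)) j = g := by
        rw [rot_rot hnn, show j + (n - j) = n by omega, rot_n]
      refine ⟨⟨rot g (n - j), j⟩, Finset.mem_sigma.2 ⟨Finset.mem_filter.2 ⟨Finset.mem_univ _, hDr⟩, ?_⟩, ?_⟩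
      · rw [Finset.mem_filter]
        refine ⟨hj, ?_⟩
        rw [good_iff_pos hnn hr _ (sum_of_A hn hdiv hDr) j, hback]
        exact hgP
      · simp only [hback]
  rw [key1.symm, key2]

include hm hn hr hrm hdiv in
lemma luka_to_pos {f : Fin n → Bool} (hf : IsLuka m (List.ofFn f)) :
    D (shf f) = ν ∧ Pos m n (shf f) ∧ wrap n f (n-1) = false ∧ D f = ν + 1 := by
  have hnn : 0 < n := hn
  obtain ⟨hpre, hneg⟩ := (luka_iff f).1 hf
  have hSn : S (af m n f) n = (n : ℤ) - ((m:ℤ)+1) * (D f) := S_af_n hnn f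
  have hsplit : S (af m n f) n = S (af m n f) (n-1) + af m n f (n-1) :=
    S_split _ hn
  have hprelast : 0 ≤ S (af m n f) (n-1) := hpre (n-1) (by omega)
  have hafneg : af m n f (n-1) < 0 := by
    by_contra h
    push_neg at h
    linarith
  have hwfalse : wrap n f (n-1) = false := af_neg_wrap hafneg
  have hafval : af m n f (n-1) = -(m:ℤ) := by
    unfold af; rw [hwfalse]; simp
  -- D f = ν + 1
  have hge : ((n:ℤ) + 1) ≤ ((m:ℤ)+1) * (D f) := by
    rw [hSn] at hneg; linarith
  have hle2 : ((m:ℤ)+1) * (D f) ≤ (n:ℤ) + m := by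
    have : -(m:ℤ) ≤ S (af m n f) n := by
      rw [hsplit, hafval]; linarith
    rw [hSn] at this; linarith
  have hDf : D f = ν + 1 := by
    have hz := hdivZ hdiv
    rcases lt_trichotomy (D f) (ν + 1) with h | h | h
    · exfalso
      have h2 : (D f : ℤ) ≤ (ν : ℤ) := by exact_mod_cast Nat.lt_succ_iff.1 h
      have h3 : ((m:ℤ)+1) * (D f) ≤ ((m:ℤ)+1) * ν :=
        mul_le_mul_of_nonneg_left h2 (by positivity)
      linarith
    · exact h
    · exfalso
      have h2 : ((ν:ℤ) + 2) ≤ (D f : ℤ) := by exact_mod_cast h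
      have h3 : ((m:ℤ)+1) * ((ν:ℤ)+2) ≤ ((m:ℤ)+1) * (D f) :=
        mul_le_mul_of_nonneg_left h2 (by positivity)
      have hm' : (1:ℤ) ≤ m := by exact_mod_cast hm
      have hr' : (r:ℤ) ≤ m := by exact_mod_cast hrm
      nlinarith
  -- D (shf f) = ν
  have hSshf : S (af m n (shf f)) n = 1 + S (af m n f) (n-1) := by
    have := S_shf (m := m) f (n-1) (by omega)
    rwa [show n - 1 + 1 = n by omega] at this
  have hDshf : D (shf f) = ν := by
    have h1 : S (af m n (shf f)) n = (n:ℤ) - ((m:ℤ)+1) * (D (shf f)) := S_af_n hnn _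
    have h2 : (D (shf f) : ℤ) = ν := by
      have hz := hdivZ hdiv
      have h3 : S (af m n f) (n-1) = S (af m n f) n + m := by
        rw [hsplit, hafval]; ring
      rw [h1, h3, hSn, hDf] at hSshf
      push_cast at hSshf ⊢
      have hmpos : (0:ℤ) < (m:ℤ) + 1 := by positivity
      have := mul_left_cancel₀ (ne_of_gt hmpos)
        (show ((m:ℤ)+1) * (D (shf f)) = ((m:ℤ)+1) * ν by linarith)
      linarith
    exact_mod_cast h2
  refine ⟨hDshf, ?_, hwfalse, hDf⟩
  intro k hk1 hk2
  have hk3 : k - 1 < n := by omega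
  have := S_shf (m := m) f (k-1) hk3
  rw [show k - 1 + 1 = k by omega] at this
  rw [this]
  have := hpre (k-1) hk3
  linarith

include hm hn hr hrm hdiv in
lemma pos_to_luka {g : Fin n → Bool} (hgD : D g = ν) (hgP : Pos m n g) :
    IsLuka m (List.ofFn (ush g)) := by
  have hnn : 0 < n := hn
  have hg1 : S (af m n g) 1 = 1 := pos_first hnn g hgP
  have hSgn : S (af m n g) n = r := sum_of_A hn hdiv hgD
  have hS : ∀ k, k ≤ n - 1 → S (af m n (ush g)) k = S (af m n g) (k+1) - 1 :=
    S_ush g hg1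
  rw [luka_iff]
  constructor
  · intro k hk
    rw [hS k (by omega)]
    have := hgP (k+1) (by omega) (by omega)
    linarith
  · have hsplit : S (af m n (ush g)) n
        = S (af m n (ush g)) (n-1) + af m n (ush g) (n-1) :=
      S_split _ hn
    rw [hsplit, hS (n-1) (le_refl _), show n - 1 + 1 = n by omega, hSgn,
      af_ush_last hnn]
    have hr' : (r:ℤ) ≤ m := by exact_mod_cast hrm
    linarith

include hm hn hr hrm hdiv in
lemma key3 :
    (Finset.univ.filter (fun f : Fin n → Bool => IsLuka m (List.ofFn f))).card
      = ((Finset.univ.filter (fun f : Fin n → Bool => D f = ν)).filter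
          (Pos m n)).card := by
  have hnn : 0 < n := hn
  apply Finset.card_bij'
    (fun f (_ : f ∈ Finset.univ.filter (fun f : Fin n → Bool => IsLuka m (List.ofFn f))) => shf f)
    (fun g (_ : g ∈ (Finset.univ.filter (fun f : Fin n → Bool => D f = ν)).filter (Pos m n)) => ush g)
  · intro f hf
    obtain ⟨hD, hP, _, _⟩ := luka_to_pos hm hn hr hrm hdiv (Finset.mem_filter.1 hf).2
    exact Finset.mem_filter.2 ⟨Finset.mem_filter.2 ⟨Finset.mem_univ _, hD⟩, hP⟩
  · intro g hg
    obtain ⟨hgA, hgP⟩ := Finset.mem_filter.1 hg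
    exact Finset.mem_filter.2 ⟨Finset.mem_univ _,
      pos_to_luka hm hn hr hrm hdiv (Finset.mem_filter.1 hgA).2 hgP⟩
  · -- ush (shf f) = f
    intro f hf
    obtain ⟨_, _, hwf, _⟩ := luka_to_pos hm hn hr hrm hdiv (Finset.mem_filter.1 hf).2
    funext i
    by_cases hi : (i : ℕ) = n - 1
    · have h1 : ush (shf f) i = false := if_pos hi
      have h2 : f i = false := by
        have hieq : i = ⟨n-1, by omega⟩ := Fin.ext hi
        rw [hieq, ← wrap_eq (f := f) (show n-1 < n by omega)]
        exact hwf
      rw [h1, h2]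
    · have h1 : ush (shf f) i = wrap n (shf f) ((i:ℕ)+1) := if_neg hi
      have hlt : (i:ℕ) + 1 < n := by have := i.isLt; omega
      rw [h1, wrap_eq hlt]
      have h2 : shf f ⟨(i:ℕ)+1, hlt⟩ = wrap n f ((i:ℕ)+1-1) :=
        if_neg (show ¬((⟨(i:ℕ)+1, hlt⟩ : Fin n) : ℕ) = 0 by simp)
      rw [h2, show (i:ℕ)+1-1 = (i:ℕ) by omega, wrap_eq i.isLt]
  · -- shf (ush g) = g
    intro g hg
    obtain ⟨hgA, hgP⟩ := Finset.mem_filter.1 hg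
    have hg0 : g ⟨0, hnn⟩ = true := by
      have h1 : S (af m n g) 1 = 1 := pos_first hnn g hgP
      rw [S_succ] at h1
      simp [S] at h1
      unfold af at h1
      by_cases hw : wrap n g 0
      · rw [← wrap_eq (f := g) hnn]; exact hw
      · exfalso
        rw [if_neg hw] at h1
        have : (1:ℤ) ≤ (m:ℤ) := by exact_mod_cast hm
        linarith
    funext i
    by_cases hi : (i : ℕ) = 0
    · have h1 : shf (ush g) i = true := if_pos hi
      have h2 : g i = true := by
        have : i = ⟨0, hnn⟩ := Fin.ext hi
        rw [this]; exact hg0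
      rw [h1, h2]
    · have h1 : shf (ush g) i = wrap n (ush g) ((i:ℕ)-1) := if_neg hi
      have hlt : (i:ℕ) - 1 < n := by have := i.isLt; omega
      rw [h1, wrap_eq hlt]
      have h2 : ush g ⟨(i:ℕ)-1, hlt⟩ = wrap n g ((i:ℕ)-1+1) :=
        if_neg (show ¬((⟨(i:ℕ)-1, hlt⟩ : Fin n) : ℕ) = n - 1 by
          simp; have := i.isLt; omega)
      rw [h2, show (i:ℕ)-1+1 = (i:ℕ) by omega, wrap_eq i.isLt]

end count

end Luka0

theorem stmt0 (m n ν r : ℕ) (hm : 1 ≤ m) (hn : 1 ≤ n)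
    (hr : 0 < r) (hrm : r ≤ m) (hdiv : n = (m + 1) * ν + r) :
    (Nat.card {f : Fin n → Bool // IsLuka m (List.ofFn f)} : ℚ)
      = (r / n) * n.choose ν := by
  classical
  rw [Nat.card_eq_fintype_card, Fintype.card_subtype]
  have hkey : r * n.choose ν
      = n * (Finset.univ.filter (fun f : Fin n → Bool => IsLuka m (List.ofFn f))).card := by
    rw [Luka0.key12 hm hn hr hrm hdiv, Luka0.key3 hm hn hr hrm hdiv]
  have hq : ((r * n.choose ν : ℕ) : ℚ)
      = ((n * (Finset.univ.filter (fun f : Fin n → Bool => IsLuka m (List.ofFn f))).card : ℕ) : ℚ) := by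
    exact_mod_cast congrArg (Nat.cast : ℕ → ℚ) hkey
  push_cast at hq
  have hn0 : (n : ℚ) ≠ 0 := by
    have : n ≠ 0 := by omega
    exact_mod_cast this
  field_simp
  linarith
end

section
/- For integers m ≥ 1 and n ≥ 0, write n = (m+1)·ν + r with 0 ≤ r ≤ m. Then the sum over all m-Dyck prefixes w of length n of m^(ĥ(w)), where ĥ(w) = (h(w) − r)/(m+1) is the reduced height, equals C(n, ν). -/
/-!
Sort the Dyck prefixes of length `n` by their number `d` of down steps; their height is
`n - (m + 1) d`. Splitting off the last step gives the ballot-type count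
`C(n, d) - m C(n, d - 1)` for `(m + 1) d ≤ n`, by induction on `n`: at the boundary
`n + 1 = (m + 1)(d + 1)` no prefix survives, and correspondingly `C(n, d + 1) = m C(n, d)`.
A prefix with `d` down steps has reduced height `ν - d`, so the weighted sum is
`∑_{d ≤ ν} m^(ν - d) (C(n, d) - m C(n, d - 1))`, which telescopes to `C(n, ν)`.
-/

open scoped Classical

/-- An m-Dyck prefix: every prefix (including the whole path) has nonnegative height. -/
def IsDyckPrefix (m : ℕ) (w : List Bool) : Prop :=
  ∀ k ≤ w.length, 0 ≤ height m (w.take k)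

/-- Reduced height of a path of length `n = (m+1)ν + r`. -/
def reducedHeight (m r : ℕ) (w : List Bool) : ℕ :=
  ((height m w - (r : ℤ)) / ((m : ℤ) + 1)).toNat

open Finset

theorem height_eq_length_sub (m : ℕ) (w : List Bool) :
    height m w = w.length - (m + 1) * w.count false := by
  rw [height, ← List.count_true_add_count_false w]
  push_cast
  ring

theorem height_nonneg_iff (m : ℕ) (w : List Bool) :
    0 ≤ height m w ↔ (m + 1) * w.count false ≤ w.length := by
  rw [height_eq_length_sub, sub_nonneg]
  norm_cast

theorem isDyckPrefix_append_singleton {m : ℕ} {w : List Bool} {b : Bool} :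
    IsDyckPrefix m (w ++ [b]) ↔ IsDyckPrefix m w ∧ 0 ≤ height m (w ++ [b]) := by
  constructor
  · intro h
    refine ⟨fun k hk => ?_, by simpa only [List.take_length] using h _ le_rfl⟩
    simpa [List.take_append_of_le_length hk] using h k (by simp; omega)
  · rintro ⟨hw, hb⟩ k hk
    rcases le_or_gt k w.length with hk' | hk'
    · simpa [List.take_append_of_le_length hk'] using hw k hk'
    · rwa [List.take_of_length_le (by simp; omega)]

theorem IsDyckPrefix.mul_count_false_le {m : ℕ} {w : List Bool} (hw : IsDyckPrefix m w) :
    (m + 1) * w.count false ≤ w.length :=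
  (height_nonneg_iff m w).mp (by simpa using hw w.length le_rfl)

theorem isDyckPrefix_append_true {m : ℕ} {w : List Bool} :
    IsDyckPrefix m (w ++ [true]) ↔ IsDyckPrefix m w := by
  rw [isDyckPrefix_append_singleton, height_nonneg_iff, and_iff_left_iff_imp]
  intro hw
  simpa using hw.mul_count_false_le.trans (Nat.le_succ _)

theorem isDyckPrefix_append_false {m : ℕ} {w : List Bool} :
    IsDyckPrefix m (w ++ [false]) ↔
      IsDyckPrefix m w ∧ (m + 1) * (w.count false + 1) ≤ w.length + 1 := by
  simp [isDyckPrefix_append_singleton, height_nonneg_iff]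

theorem card_filter_eq_sum_card_filter_snoc {α : Type*} [Fintype α] {n : ℕ}
    (p : (Fin (n + 1) → α) → Prop) [DecidablePred p] :
    #{f | p f} = ∑ a, #{f : Fin n → α | p (Fin.snoc f a)} := by
  simp only [card_filter]
  rw [← (Fin.snocEquiv fun _ => α).sum_comp, Fintype.sum_prod_type]
  rfl

theorem List.ofFn_snoc {α : Type*} {n : ℕ} (f : Fin n → α) (a : α) :
    List.ofFn (Fin.snoc f a : Fin (n + 1) → α) = List.ofFn f ++ [a] := by
  rw [List.ofFn_succ']
  simp

noncomputable def dyckPrefixCount (m n d : ℕ) : ℕ :=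
  #{f : Fin n → Bool | IsDyckPrefix m (List.ofFn f) ∧ (List.ofFn f).count false = d}

theorem dyckPrefixCount_succ (m n d : ℕ) :
    dyckPrefixCount m (n + 1) d = dyckPrefixCount m n d +
      #{f : Fin n → Bool | IsDyckPrefix m (List.ofFn f) ∧
        (m + 1) * ((List.ofFn f).count false + 1) ≤ n + 1 ∧
        (List.ofFn f).count false + 1 = d} := by
  simp only [dyckPrefixCount, card_filter_eq_sum_card_filter_snoc, Fintype.sum_bool,
    List.ofFn_snoc, isDyckPrefix_append_true, isDyckPrefix_append_false, List.count_append,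
    List.length_ofFn]
  simp [and_assoc]

theorem dyckPrefixCount_zero_right (m n : ℕ) : dyckPrefixCount m n 0 = 1 := by
  induction n with
  | zero => simp [dyckPrefixCount, IsDyckPrefix, height]
  | succ n ih => simp [dyckPrefixCount_succ, ih]

theorem dyckPrefixCount_succ_succ {m n d : ℕ} (h : (m + 1) * (d + 1) ≤ n + 1) :
    dyckPrefixCount m (n + 1) (d + 1) =
      dyckPrefixCount m n (d + 1) + dyckPrefixCount m n d := by
  rw [dyckPrefixCount_succ, dyckPrefixCount]
  congr 2
  ext f
  simp only [mem_filter, mem_univ, true_and, add_left_inj]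
  constructor
  · rintro ⟨hw, -, hd⟩; exact ⟨hw, hd⟩
  · rintro ⟨hw, hd⟩; exact ⟨hw, hd ▸ h, hd⟩

theorem dyckPrefixCount_eq_zero {m n d : ℕ} (h : n < (m + 1) * d) :
    dyckPrefixCount m n d = 0 := by
  rw [dyckPrefixCount, card_eq_zero, filter_eq_empty_iff]
  rintro f - ⟨hw, rfl⟩
  have := hw.mul_count_false_le
  simp at this
  omega

theorem Nat.choose_succ_eq_mul_choose_of_succ_eq {m n d : ℕ} (h : n + 1 = (m + 1) * (d + 1)) :
    n.choose (d + 1) = m * n.choose d := by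
  have hnd : n - d = m * (d + 1) := by
    rw [add_mul, one_mul] at h
    omega
  refine Nat.eq_of_mul_eq_mul_right (d.succ_pos : 0 < d + 1) ?_
  rw [Nat.choose_succ_right_eq, hnd, Nat.succ_eq_add_one]
  ring

theorem dyckPrefixCount_add_mul_choose {m n d : ℕ} (h : (m + 1) * (d + 1) ≤ n) :
    dyckPrefixCount m n (d + 1) + m * n.choose d = n.choose (d + 1) := by
  induction n generalizing d with
  | zero => simp at h
  | succ n ih =>
    have h_last : dyckPrefixCount m n (d + 1) + m * n.choose d = n.choose (d + 1) := by
      rcases h.lt_or_eq with hlt | heq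
      · exact ih (Nat.lt_succ_iff.mp hlt)
      · rw [dyckPrefixCount_eq_zero (by omega), Nat.choose_succ_eq_mul_choose_of_succ_eq heq.symm,
          zero_add]
    have h_init : dyckPrefixCount m n d + m * (n + 1).choose d = (m + 1) * n.choose d := by
      cases d with
      | zero => simp [dyckPrefixCount_zero_right]; ring
      | succ e =>
        rw [Nat.choose_succ_succ', ← ih (by nlinarith)]
        ring
    rw [dyckPrefixCount_succ_succ h, Nat.choose_succ_succ']
    linarith

theorem sum_pow_mul_dyckPrefixCount {m n k : ℕ} (h : (m + 1) * k ≤ n) :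
    ∑ d ∈ range (k + 1), m ^ (k - d) * dyckPrefixCount m n d = n.choose k := by
  induction k with
  | zero => simp [dyckPrefixCount_zero_right]
  | succ k ih =>
    rw [sum_range_succ, Nat.sub_self, pow_zero, one_mul, ← dyckPrefixCount_add_mul_choose h,
      ← ih (by nlinarith), mul_sum, add_comm]
    congr 1
    refine sum_congr rfl fun d hd => ?_
    rw [Nat.succ_sub (mem_range_succ_iff.mp hd), pow_succ']
    ring

theorem IsDyckPrefix.count_false_le {m ν r : ℕ} {w : List Bool} (hw : IsDyckPrefix m w)
    (hlen : w.length = (m + 1) * ν + r) (hr : r ≤ m) : w.count false ≤ ν := by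
  by_contra! hν
  have hle := hw.mul_count_false_le
  have hgt : (m + 1) * (ν + 1) ≤ (m + 1) * w.count false := Nat.mul_le_mul_left _ hν
  rw [mul_add] at hgt
  omega

theorem reducedHeight_eq {m ν r : ℕ} {w : List Bool} (hlen : w.length = (m + 1) * ν + r)
    (hν : w.count false ≤ ν) : reducedHeight m r w = ν - w.count false := by
  have : height m w - r = (m + 1) * ((ν - w.count false : ℕ) : ℤ) := by
    rw [height_eq_length_sub, hlen, Nat.cast_sub hν]
    push_cast
    ring
  rw [reducedHeight, this, Int.mul_ediv_cancel_left _ (by positivity), Int.toNat_natCast]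

theorem stmt1_general (m n ν r : ℕ) (hrm : r ≤ m)
    (hdiv : n = (m + 1) * ν + r) :
    (∑ f : Fin n → Bool,
        if IsDyckPrefix m (List.ofFn f) then m ^ reducedHeight m r (List.ofFn f) else 0)
      = n.choose ν := by
  have hlen (f : Fin n → Bool) : (List.ofFn f).length = (m + 1) * ν + r := by
    rw [List.length_ofFn, hdiv]
  calc _ = ∑ f with IsDyckPrefix m (List.ofFn f), m ^ reducedHeight m r (List.ofFn f) :=
        (sum_filter _ _).symm
    _ = ∑ d ∈ range (ν + 1),
          ∑ f with IsDyckPrefix m (List.ofFn f) ∧ (List.ofFn f).count false = d,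
            m ^ reducedHeight m r (List.ofFn f) := by
        rw [← sum_fiberwise_of_maps_to (g := fun f => (List.ofFn f).count false)
          (t := range (ν + 1))]
        · simp only [filter_filter]
          rfl
        · intro f hf
          exact mem_range_succ_iff.mpr ((mem_filter.mp hf).2.count_false_le (hlen f) hrm)
    _ = ∑ d ∈ range (ν + 1), m ^ (ν - d) * dyckPrefixCount m n d := by
        refine sum_congr rfl fun d hd => ?_
        rw [dyckPrefixCount, card_eq_sum_ones, mul_sum, mul_one]
        refine sum_congr rfl fun f hf => ?_
        obtain ⟨-, -, rfl⟩ := mem_filter.mp hf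
        rw [reducedHeight_eq (hlen f) (mem_range_succ_iff.mp hd)]
    _ = n.choose ν := sum_pow_mul_dyckPrefixCount (by omega)

theorem stmt1 (m n ν r : ℕ) (hm : 1 ≤ m) (hrm : r ≤ m)
    (hdiv : n = (m + 1) * ν + r) :
    (∑ f : Fin n → Bool,
        if IsDyckPrefix m (List.ofFn f) then m ^ reducedHeight m r (List.ofFn f) else 0)
      = n.choose ν :=
  stmt1_general m n ν r hrm hdiv
end

section
/- Fix m ≥ 1. If w is a path with steps +1 and −m of length n and total height r with 1 ≤ r ≤ n, then exactly r of the n cyclic rotations of w are such that every nonempty prefix has strictly positive height (Cycle Lemma for steps {+1, −m}). -/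
open scoped Classical

namespace CycleAux

/-- Value of a single step. -/
def stepv (m : ℕ) (b : Bool) : ℤ := if b then 1 else -(m : ℤ)

lemma height_eq_sum (m : ℕ) (l : List Bool) : height m l = (l.map (stepv m)).sum := by
  induction l with
  | nil => simp [height]
  | cons a t ih =>
    cases a <;> simp [height, stepv, List.count_cons] at * <;> linarith

lemma sum_map_eq (m : ℕ) (l : List Bool) :
    (l.map (stepv m)).sum = ∑ i ∈ Finset.range l.length, stepv m (l.getD i true) := by
  induction l with
  | nil => simp
  | cons a t ih =>
    rw [List.map_cons, List.sum_cons, List.length_cons, Finset.sum_range_succ']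
    simp [ih, add_comm]

/-- Step sequence of the periodic extension of `w`. -/
def f (m : ℕ) (w : List Bool) (j : ℕ) : ℤ := stepv m (w.getD (j % w.length) true)

/-- Partial sums of the periodic step sequence. -/
def S (m : ℕ) (w : List Bool) (j : ℕ) : ℤ := ∑ i ∈ Finset.range j, f m w i

lemma S_succ (m : ℕ) (w : List Bool) (j : ℕ) : S m w (j + 1) = S m w j + f m w j :=
  Finset.sum_range_succ _ _

lemma f_periodic (m : ℕ) (w : List Bool) (j : ℕ) : f m w (j + w.length) = f m w j := by
  simp [f, Nat.add_mod_right]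

lemma f_cases (m : ℕ) (w : List Bool) (j : ℕ) : f m w j = 1 ∨ f m w j ≤ 0 := by
  unfold f stepv
  cases w.getD (j % w.length) true <;> simp

lemma S_len (m : ℕ) (w : List Bool) : S m w w.length = height m w := by
  rw [height_eq_sum, sum_map_eq]
  exact (Finset.sum_congr rfl fun i hi => by
    rw [f, Nat.mod_eq_of_lt (Finset.mem_range.mp hi)]).symm

lemma S_add_len (m : ℕ) (w : List Bool) (j : ℕ) :
    S m w (j + w.length) = S m w j + height m w := by
  induction j with
  | zero => simpa [S] using S_len m w
  | succ j ih =>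
    have : j + 1 + w.length = (j + w.length) + 1 := by omega
    rw [this, S_succ, ih, f_periodic, S_succ]
    ring

lemma height_take_rotate (m : ℕ) (w : List Bool) {i k : ℕ} (hk : k ≤ w.length) :
    height m ((w.rotate i).take k) = S m w (i + k) - S m w i := by
  rw [height_eq_sum, sum_map_eq]
  have hlen : ((w.rotate i).take k).length = k := by
    simp [List.length_rotate]; omega
  rw [hlen]
  have hstep : ∀ t ∈ Finset.range k,
      stepv m (((w.rotate i).take k).getD t true) = f m w (i + t) := by
    intro t ht
    have ht' : t < k := Finset.mem_range.mp ht
    have h1 : t < (w.rotate i).length := by simp [List.length_rotate]; omega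
    rw [List.getD_eq_getElem _ _ (by omega : t < ((w.rotate i).take k).length),
      List.getElem_take]
    rw [List.getElem_rotate]
    have h2 : (t + i) % w.length < w.length := Nat.mod_lt _ (by omega)
    rw [f, Nat.add_comm i t, ← List.getD_eq_getElem _ true h2]
  rw [Finset.sum_congr rfl hstep]
  have : ∑ t ∈ Finset.range k, f m w (i + t) = ∑ j ∈ Finset.Ico i (i + k), f m w j := by
    rw [Finset.sum_Ico_eq_sum_range]
    simp
  rw [this, Finset.sum_Ico_eq_sub _ (by omega), S, S]

variable {m : ℕ} {w : List Bool}

/-- The minimum of `S` over a full period starting at `i`; this equals the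
infimum of `S j` over all `j ≥ i` since the total height is positive. -/
def M (m : ℕ) (w : List Bool) (hn : 0 < w.length) (i : ℕ) : ℤ :=
  (Finset.Ico i (i + w.length)).inf' (Finset.nonempty_Ico.mpr (by omega)) (S m w)

variable (hn : 0 < w.length) (hh : 1 ≤ height m w)

include hh in
lemma M_min (i : ℕ) : M m w hn i = min (S m w i) (M m w hn (i + 1)) := by
  apply le_antisymm
  · apply le_min
    · exact Finset.inf'_le _ (Finset.mem_Ico.mpr ⟨le_refl i, by omega⟩)
    · apply Finset.le_inf'
      intro j hj
      rw [Finset.mem_Ico] at hj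
      rcases Nat.lt_or_ge j (i + w.length) with h | h
      · exact Finset.inf'_le _ (Finset.mem_Ico.mpr ⟨by omega, h⟩)
      · have hj' : j = i + w.length := by omega
        subst hj'
        calc M m w hn i ≤ S m w i :=
              Finset.inf'_le _ (Finset.mem_Ico.mpr ⟨le_refl i, by omega⟩)
          _ ≤ S m w (i + w.length) := by rw [S_add_len]; omega
  · obtain ⟨j, hj, hje⟩ := Finset.exists_mem_eq_inf' (s := Finset.Ico i (i + w.length))
      (Finset.nonempty_Ico.mpr (by omega)) (S m w)
    rw [Finset.mem_Ico] at hj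
    rcases Nat.eq_or_lt_of_le hj.1 with h | h
    · subst h
      calc min (S m w i) (M m w hn (i+1)) ≤ S m w i := min_le_left _ _
        _ = M m w hn i := hje.symm
    · calc min (S m w i) (M m w hn (i+1)) ≤ M m w hn (i+1) := min_le_right _ _
        _ ≤ S m w j := Finset.inf'_le _ (Finset.mem_Ico.mpr ⟨by omega, by omega⟩)
        _ = M m w hn i := hje.symm

include hh in
lemma M_step_stay (i : ℕ) (h : ¬ S m w i < M m w hn (i + 1)) :
    M m w hn (i + 1) = M m w hn i := by
  rw [M_min hn hh i, min_eq_right (by omega)]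

include hh in
lemma M_step_jump (i : ℕ) (h : S m w i < M m w hn (i + 1)) :
    M m w hn (i + 1) = M m w hn i + 1 := by
  have hMi : M m w hn i = S m w i := by
    rw [M_min hn hh i, min_eq_left (by omega)]
  have hS1 : M m w hn (i + 1) ≤ S m w (i + 1) :=
    Finset.inf'_le _ (Finset.mem_Ico.mpr ⟨le_refl _, by omega⟩)
  have hf : f m w i = 1 := by
    rcases f_cases m w i with h1 | h1
    · exact h1
    · have := S_succ m w i; omega
  have := S_succ m w i
  omega

lemma M_shift : M m w hn w.length = M m w hn 0 + height m w := by
  apply le_antisymm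
  · obtain ⟨j, hj, hje⟩ := Finset.exists_mem_eq_inf' (s := Finset.Ico 0 (0 + w.length))
      (Finset.nonempty_Ico.mpr (by omega)) (S m w)
    rw [Finset.mem_Ico] at hj
    have : M m w hn w.length ≤ S m w (j + w.length) :=
      Finset.inf'_le _ (Finset.mem_Ico.mpr ⟨by omega, by omega⟩)
    rw [S_add_len] at this
    have hje' : M m w hn 0 = S m w j := hje
    omega
  · apply Finset.le_inf'
    intro j hj
    rw [Finset.mem_Ico] at hj
    obtain ⟨j', rfl⟩ : ∃ j', j = j' + w.length := ⟨j - w.length, by omega⟩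
    rw [S_add_len]
    have : M m w hn 0 ≤ S m w j' :=
      Finset.inf'_le _ (Finset.mem_Ico.mpr ⟨by omega, by omega⟩)
    omega

lemma good_iff (i : ℕ) :
    (S m w i < M m w hn (i + 1)) ↔ ∀ k, 0 < k → k ≤ w.length → S m w i < S m w (i + k) := by
  rw [M, Finset.lt_inf'_iff]
  constructor
  · intro h k hk hkn
    exact h (i + k) (Finset.mem_Ico.mpr ⟨by omega, by omega⟩)
  · intro h j hj
    rw [Finset.mem_Ico] at hj
    have := h (j - i) (by omega) (by omega)
    have hji : i + (j - i) = j := by omega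
    rwa [hji] at this

end CycleAux

/-- Cycle Lemma for steps {+1, -m}: if a path of length `n` has total height `r`
with `1 ≤ r ≤ n`, then exactly `r` of its `n` cyclic rotations have all nonempty
prefixes of strictly positive height. -/
theorem stmt6 (m : ℕ) (hm : 1 ≤ m) (n : ℕ) (w : List Bool) (hlen : w.length = n)
    (r : ℤ) (hr : height m w = r) (h1 : 1 ≤ r) (hrn : r ≤ (n : ℤ)) :
    (((Finset.range n).filter fun i =>
        ∀ k, 0 < k → k ≤ n → 0 < height m ((w.rotate i).take k)).card : ℤ) = r := by
  subst hlen
  subst hr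
  have hn : 0 < w.length := by
    by_contra h
    have : w.length = 0 := by omega
    rw [this] at hrn
    simp at hrn
    omega
  have hh : 1 ≤ height m w := h1
  open CycleAux in
  have key : ∀ i ∈ Finset.range w.length,
      ((if (∀ k, 0 < k → k ≤ w.length → 0 < height m ((w.rotate i).take k)) then 1 else 0 : ℤ))
        = M m w hn (i + 1) - M m w hn i := by
    intro i _
    have hPiff : (∀ k, 0 < k → k ≤ w.length → 0 < height m ((w.rotate i).take k)) ↔
        S m w i < M m w hn (i + 1) := by
      rw [good_iff hn]
      constructor
      · intro h k hk hkn
        have := h k hk hkn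
        rw [height_take_rotate m w hkn] at this
        omega
      · intro h k hk hkn
        rw [height_take_rotate m w hkn]
        have := h k hk hkn
        omega
    by_cases hP : ∀ k, 0 < k → k ≤ w.length → 0 < height m ((w.rotate i).take k)
    · rw [if_pos hP, M_step_jump hn hh i (hPiff.mp hP)]
      ring
    · rw [if_neg hP, M_step_stay hn hh i (fun hc => hP (hPiff.mpr hc))]
      ring
  have hcard : (((Finset.range w.length).filter fun i =>
      ∀ k, 0 < k → k ≤ w.length → 0 < height m ((w.rotate i).take k)).card : ℤ)
      = ∑ i ∈ Finset.range w.length,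
        ((if (∀ k, 0 < k → k ≤ w.length → 0 < height m ((w.rotate i).take k)) then 1 else 0 : ℤ)) := by
    rw [Finset.card_filter]
    push_cast
    rfl
  rw [hcard, Finset.sum_congr rfl key, Finset.sum_range_sub (M m w hn),
    CycleAux.M_shift hn]
  ring
end

section
/- Fix m ≥ 1 and n not divisible by m+1, with n = (m+1)ν + r, 1 ≤ r ≤ m. The map sending an m-Łukasiewicz path of length n of the form q·D to the path U·q is a bijection from m-Łukasiewicz paths of length n onto paths of length n with ν down-steps that stay strictly above height 0 at every nonempty prefix (and have total height r). -/
lemma height_nil (m : ℕ) : height m [] = 0 := by simp [height]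

lemma height_cons (m : ℕ) (b : Bool) (l : List Bool) :
    height m (b :: l) = (if b then 1 else -(m:ℤ)) + height m l := by
  cases b <;> simp [height, List.count_cons] <;> ring

lemma height_append (m : ℕ) (l1 l2 : List Bool) :
    height m (l1 ++ l2) = height m l1 + height m l2 := by
  simp only [height, List.count_append]
  push_cast
  ring

lemma count_true_add_count_false (l : List Bool) :
    l.count true + l.count false = l.length := by
  induction l with
  | nil => simp
  | cons b t ih => cases b <;> simp [List.count_cons] <;> omega

lemma height_eq (m : ℕ) (l : List Bool) :
    height m l = (l.length : ℤ) - ((m:ℤ) + 1) * l.count false := by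
  have h2 : (l.count true : ℤ) + l.count false = l.length := by
    exact_mod_cast count_true_add_count_false l
  simp only [height]
  linear_combination h2

lemma take_concat_of_le {l : List Bool} {b : Bool} {k : ℕ} (h : k ≤ l.length) :
    (l ++ [b]).take k = l.take k := by
  rw [List.take_append]
  simp [Nat.sub_eq_zero_of_le h]

/-- A Luka path of positive length ends with a down step. -/
lemma luka_getLast {m : ℕ} {w : List Bool} (hw : IsLuka m w) (hne : w ≠ []) :
    w.getLast hne = false := by
  obtain ⟨hpre, hneg⟩ := hw
  by_contra hb
  have hb' : w.getLast hne = true := by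
    cases h : w.getLast hne
    · exact absurd h hb
    · rfl
  have hwd : w.dropLast ++ [w.getLast hne] = w := List.dropLast_append_getLast hne
  have h0 : 0 ≤ height m w.dropLast := by
    have := hpre (w.length - 1) (by
      have : 0 < w.length := List.length_pos_iff.mpr hne
      omega)
    rwa [← List.dropLast_eq_take] at this
  have : height m w = height m w.dropLast + 1 := by
    conv_lhs => rw [← hwd]
    rw [height_append, hb', height_cons, height_nil]
    simp
  omega

/-- The map sending an m-Łukasiewicz path `q ++ [D]` to `U ++ q` is a bijection
from m-Łukasiewicz paths of length `n` onto paths of length `n` with `ν` down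
steps, total height `r`, which stay strictly above height 0 at every nonempty
prefix. -/
theorem stmt7 (m n ν r : ℕ) (hm : 1 ≤ m) (hr : 1 ≤ r) (hrm : r ≤ m)
    (hdiv : n = (m + 1) * ν + r) :
    Set.BijOn (fun w : List Bool => true :: w.dropLast)
      {w : List Bool | w.length = n ∧ IsLuka m w}
      {w : List Bool | w.length = n ∧ w.count false = ν ∧ height m w = (r : ℤ) ∧
        ∀ k, 0 < k → k ≤ w.length → 1 ≤ height m (w.take k)} := by
  have hn : 0 < n := by omega
  have hn' : (n:ℤ) = ((m:ℤ) + 1) * ν + r := by exact_mod_cast hdiv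
  have hrm' : (r:ℤ) ≤ (m:ℤ) := by exact_mod_cast hrm
  have hr' : (1:ℤ) ≤ (r:ℤ) := by exact_mod_cast hr
  refine ⟨?maps, ?inj, ?surj⟩
  · -- MapsTo
    rintro w ⟨hlen, hluka⟩
    obtain ⟨hpre, hneg⟩ := hluka
    have hne : w ≠ [] := by
      intro h; rw [h] at hlen; simp at hlen; omega
    have hlast : w.getLast hne = false := luka_getLast ⟨hpre, hneg⟩ hne
    obtain ⟨q, hwd⟩ : ∃ q, w = q ++ [false] :=
      ⟨w.dropLast, by rw [← hlast]; exact (List.dropLast_append_getLast hne).symm⟩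
    subst hwd
    have hql : q.length + 1 = n := by simpa using hlen
    have hH : height m (q ++ [false]) = height m q - m := by
      rw [height_append, height_cons, height_nil]; simp; ring
    have hq0 : 0 ≤ height m q := by
      have := hpre q.length (by simp)
      rwa [take_concat_of_le le_rfl, List.take_length] at this
    have hub : height m q ≤ (m:ℤ) - 1 := by omega
    have hcount : (q ++ [false]).count false = q.count false + 1 := by simp
    have he := height_eq m (q ++ [false])
    rw [hlen, hcount] at he
    push_cast at he
    have key : ((m:ℤ)+1) * ((q.count false : ℤ) - ν) = (r:ℤ) - 1 - height m q := by
      linear_combination he - hH + hn'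
    have h1 : (q.count false : ℤ) - ν < 1 := by
      by_contra h
      push_neg at h
      have := le_mul_of_one_le_right (show (0:ℤ) ≤ (m:ℤ)+1 by positivity) h
      linarith
    have h2 : -1 < (q.count false : ℤ) - ν := by
      by_contra h
      push_neg at h
      have := mul_le_mul_of_nonneg_left h (show (0:ℤ) ≤ (m:ℤ)+1 by positivity)
      linarith
    have hcν' : (q.count false : ℤ) = (ν:ℤ) := by omega
    have hcν : q.count false = ν := by exact_mod_cast hcν'
    have hHQ : height m q = (r:ℤ) - 1 := by
      rw [hcν'] at key; simp at key; linarith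
    simp only [Set.mem_setOf_eq, List.dropLast_concat]
    refine ⟨by simp; omega, by simp [List.count_cons, hcν], ?_, ?_⟩
    · rw [height_cons]; simp; omega
    · intro k hk hkle
      simp only [List.length_cons] at hkle
      obtain ⟨j, rfl⟩ : ∃ j, k = j + 1 := ⟨k - 1, by omega⟩
      rw [List.take_succ_cons, height_cons]
      simp only [if_true]
      have hj : (q ++ [false]).take j = q.take j := take_concat_of_le (by omega)
      have := hpre j (by simp; omega)
      rw [hj] at this
      omega
  · -- InjOn
    rintro w₁ ⟨hl₁, hk₁⟩ w₂ ⟨hl₂, hk₂⟩ heq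
    have hne₁ : w₁ ≠ [] := by intro h; rw [h] at hl₁; simp at hl₁; omega
    have hne₂ : w₂ ≠ [] := by intro h; rw [h] at hl₂; simp at hl₂; omega
    have hd : w₁.dropLast = w₂.dropLast := by simpa using heq
    calc w₁ = w₁.dropLast ++ [false] := by
              rw [← luka_getLast hk₁ hne₁]; exact (List.dropLast_append_getLast hne₁).symm
      _ = w₂.dropLast ++ [false] := by rw [hd]
      _ = w₂ := by
              rw [← luka_getLast hk₂ hne₂]; exact List.dropLast_append_getLast hne₂
  · -- SurjOn
    rintro v ⟨hlen, hcount, hheight, hpre⟩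
    have hne : v ≠ [] := by intro h; rw [h] at hlen; simp at hlen; omega
    obtain ⟨b, t, rfl⟩ : ∃ b t, v = b :: t := by
      cases v with
      | nil => exact absurd rfl hne
      | cons b t => exact ⟨b, t, rfl⟩
    have hb : b = true := by
      have h1 := hpre 1 (by omega) (by simp)
      rw [List.take_succ_cons, List.take_zero, height_cons, height_nil] at h1
      cases b
      · simp at h1; omega
      · rfl
    subst hb
    refine ⟨t ++ [false], ⟨?_, ?_, ?_⟩, ?_⟩
    · simp at hlen ⊢; omega
    · -- proper prefixes nonneg
      intro k hk
      simp only [List.length_append, List.length_singleton] at hk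
      rcases Nat.eq_zero_or_pos k with h0 | h0
      · subst h0; simp [height_nil]
      · have hkt : k ≤ t.length := by omega
        rw [take_concat_of_le hkt]
        have := hpre (k + 1) (by omega) (by simp; omega)
        rw [List.take_succ_cons, height_cons] at this
        simp only [if_true] at this
        omega
    · -- full height negative
      rw [height_cons] at hheight
      simp only [if_true] at hheight
      rw [height_append, height_cons, height_nil]
      simp only [Bool.false_eq_true, if_false]
      omega
    · simp
end

section
/- Let X = Σ_{x ∈ S} U_x, where S is an inhomogeneous Poisson point process on (0,1] with intensity λ(x) = 1/(2x) and, conditionally on S, the U_x are independent with U_x uniform on [0,x]. Then the cumulant generating function of X is K(z) = ∫_0^z (e^y − 1 − y)/(2y²) dy, and consequently the n-th cumulant of X equals 1/(2n(n+1)) for all n ≥ 1. -/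
/-!
Substituting `y = x z` turns Campbell's exponent into `∫_0^z (e^y - 1 - y) / (2 y²) dy = K z`.
The integrand extends across `y = 0` to the entire function `∑ₖ yᵏ / (2 (k+2)!)`, which is
therefore `K'`; reading off its Taylor coefficients gives
`K⁽ⁿ⁺¹⁾(0) = n! / (2 (n+2)!) = 1 / (2 (n+1) (n+2))`.
-/

open MeasureTheory ProbabilityTheory Real

/-- The cumulant generating function `K(z) = ∫_0^z (e^y - 1 - y)/(2y²) dy`. -/
noncomputable def K (z : ℝ) : ℝ :=
  ∫ y in (0:ℝ)..z, (Real.exp y - 1 - y) / (2 * y ^ 2)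

open Nat FormalMultilinearSeries Filter

theorem HasFPowerSeriesAt.iteratedDeriv_eq_factorial_mul {𝕜 : Type*}
    [NontriviallyNormedField 𝕜] [CompleteSpace 𝕜] [CharZero 𝕜] {f : 𝕜 → 𝕜} {c : ℕ → 𝕜} {x : 𝕜}
    (hf : HasFPowerSeriesAt f (ofScalars 𝕜 c) x) (n : ℕ) :
    iteratedDeriv n f x = n ! * c n := by
  rw [← congrFun (ofScalars_series_injective 𝕜 𝕜
    (hf.analyticAt.hasFPowerSeriesAt.eq_formalMultilinearSeries hf)) n]
  have : (n ! : 𝕜) ≠ 0 := by exact_mod_cast n.factorial_ne_zero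
  field_simp

theorem Real.hasSum_pow_div_factorial_add_two {t : ℝ} (ht : t ≠ 0) :
    HasSum (fun k : ℕ => t ^ k / (k + 2)!) ((exp t - 1 - t) / t ^ 2) := by
  have hexp : HasSum (fun n : ℕ => t ^ n / n !) (exp t) := by
    rw [Real.exp_eq_exp_ℝ]
    exact NormedSpace.expSeries_div_hasSum_exp t
  have htail := ((hasSum_nat_add_iff' 2).mpr hexp).div_const (t ^ 2)
  have hterm : (fun k : ℕ => t ^ k / (k + 2)!) = fun k => t ^ (k + 2) / (k + 2)! / t ^ 2 := by
    funext k
    field_simp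
    ring
  rw [hterm, sub_sub]
  simpa [Finset.sum_range_succ] using htail

/-- Its sum is the continuous extension across `y = 0` of the integrand
`(exp y - 1 - y) / (2 y²)` of `K`, which itself takes the junk value `0` there. -/
noncomputable def derivKSeries : FormalMultilinearSeries ℝ ℝ ℝ :=
  ofScalars ℝ fun k => 1 / (2 * ((k + 2)! : ℝ))

theorem derivKSeries_radius : derivKSeries.radius = ⊤ := by
  refine ofScalars_radius_eq_top_of_tendsto _ _ (Eventually.of_forall fun k => by positivity) ?_
  have hratio : ∀ k : ℕ, ‖1 / (2 * ((k + 1 + 2)! : ℝ))‖ / ‖1 / (2 * ((k + 2)! : ℝ))‖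
      = 1 / ((k + 2 : ℕ) + 1 : ℝ) := by
    intro k
    rw [Real.norm_of_nonneg (by positivity), Real.norm_of_nonneg (by positivity),
      show k + 1 + 2 = (k + 2) + 1 by ring, Nat.factorial_succ]
    push_cast
    field_simp
  simp only [Nat.succ_eq_add_one, hratio]
  exact tendsto_one_div_add_atTop_nhds_zero_nat.comp (tendsto_add_atTop_nat 2)

theorem hasFPowerSeriesOnBall_derivKSeries_sum :
    HasFPowerSeriesOnBall derivKSeries.sum derivKSeries 0 ⊤ :=
  derivKSeries_radius ▸ derivKSeries.hasFPowerSeriesOnBall (by simp [derivKSeries_radius])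

theorem derivKSeries_sum_of_ne_zero {y : ℝ} (hy : y ≠ 0) :
    derivKSeries.sum y = (exp y - 1 - y) / (2 * y ^ 2) := by
  have hterm : (fun k => derivKSeries k fun _ => y) = fun k => y ^ k / (k + 2)! / 2 := by
    funext k
    simp only [derivKSeries, ofScalars_apply_eq, smul_eq_mul]
    ring
  rw [FormalMultilinearSeries.sum, hterm,
    ((hasSum_pow_div_factorial_add_two hy).div_const 2).tsum_eq]
  ring

theorem deriv_K : deriv K = derivKSeries.sum := by
  have hcont : Continuous derivKSeries.sum := AnalyticOnNhd.continuous fun y _ =>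
    hasFPowerSeriesOnBall_derivKSeries_sum.analyticAt_of_mem (by simp)
  have hK : K = fun z => ∫ y in (0:ℝ)..z, derivKSeries.sum y := by
    funext z
    refine intervalIntegral.integral_congr_ae ?_
    filter_upwards [Measure.ae_ne volume 0] with y hy _
    exact (derivKSeries_sum_of_ne_zero hy).symm
  funext z
  rw [hK]
  exact hcont.deriv_integral _ 0 z

theorem iteratedDeriv_succ_K_zero (n : ℕ) :
    iteratedDeriv (n + 1) K 0 = 1 / (2 * (n + 1) * (n + 2)) := by
  rw [iteratedDeriv_succ', deriv_K,
    hasFPowerSeriesOnBall_derivKSeries_sum.hasFPowerSeriesAt.iteratedDeriv_eq_factorial_mul,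
    show n + 2 = (n + 1) + 1 by ring, Nat.factorial_succ, Nat.factorial_succ]
  push_cast
  field_simp
  ring

theorem setIntegral_Ioc_exp_mul_eq_K {z : ℝ} (hz : z ≠ 0) :
    ∫ x in Set.Ioc (0:ℝ) 1, ((exp (x * z) - 1) / (x * z) - 1) * (1 / (2 * x)) = K z := by
  have hintegrand : ∀ x : ℝ, ((exp (x * z) - 1) / (x * z) - 1) * (1 / (2 * x))
      = z • ((exp (x * z) - 1 - x * z) / (2 * (x * z) ^ 2)) := by
    intro x
    rcases eq_or_ne x 0 with rfl | hx
    · simp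
    · rw [smul_eq_mul]
      field_simp
  rw [← intervalIntegral.integral_of_le zero_le_one,
    intervalIntegral.integral_congr fun x _ => hintegrand x, intervalIntegral.integral_smul,
    intervalIntegral.integral_comp_mul_right (fun y => (exp y - 1 - y) / (2 * y ^ 2)) hz,
    zero_mul, one_mul, smul_smul, mul_inv_cancel₀ hz, one_smul, K]

/-- For `X = Σ_{x ∈ S} U_x` with `S` a Poisson process on `(0,1]` of intensity
`1/(2x)` and independent marks `U_x ~ Unif[0,x]`, Campbell's theorem gives the
moment generating function stated in the hypothesis; then the cumulant
generating function of `X` is `K` and the n-th cumulant is `1/(2n(n+1))`. -/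
theorem stmt8 {Ω : Type*} [MeasurableSpace Ω] (μ : Measure Ω) [IsProbabilityMeasure μ]
    (X : Ω → ℝ)
    (hX : ∀ z : ℝ, mgf X μ z =
      Real.exp (∫ x in Set.Ioc (0:ℝ) 1,
        ((Real.exp (x * z) - 1) / (x * z) - 1) * (1 / (2 * x)))) :
    (∀ z : ℝ, cgf X μ z = K z) ∧
    ∀ n : ℕ, 1 ≤ n → iteratedDeriv n K 0 = 1 / (2 * n * (n + 1)) := by
  refine ⟨fun z => ?_, fun n hn => ?_⟩
  · rcases eq_or_ne z 0 with rfl | hz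
    · simp [cgf_zero, K]
    · rw [cgf, hX z, log_exp, setIntegral_Ioc_exp_mul_eq_K hz]
  · obtain ⟨m, rfl⟩ := Nat.exists_eq_add_of_le' hn
    rw [iteratedDeriv_succ_K_zero]
    push_cast
    ring
end

section
/- Let c = c(x) > 0 be defined for large x by the saddle point equation (e^c − 1 − 3c)/(2c²) = x. Then as x → ∞, c = log x + 2 log log x + log 2 + o(1). -/
open Filter Real Asymptotics Topology

/-! Writing the saddle point equation as `e^c = 2xc² (1 + d)` with `d = (1 + 3c)/(2xc²) = O(1/x)`
and taking logarithms gives `c = log x + 2 log c + log 2 + log (1 + d)`. Since `c ≥ log x → ∞`,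
`log c = o(c)`, hence `c ~ log x`, and then `2 log c = 2 log log x + 2 log (c / log x)` with the
last term tending to `0`. -/

lemma one_lt_of_one_add_two_mul_lt_exp {t : ℝ} (ht : 0 < t) (h : 1 + 2 * t < exp t) : 1 < t := by
  by_contra! ht1
  have hquad := (abs_le.mp (abs_exp_sub_one_sub_id_le (abs_le.mpr ⟨by linarith, ht1⟩))).2
  nlinarith

lemma tendsto_div_one_of_eq_add_mul_log {α : Type*} {l : Filter α} {u v r : α → ℝ} {k ρ : ℝ}
    (hu : Tendsto u l atTop) (hr : Tendsto r l (𝓝 ρ))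
    (h : ∀ᶠ a in l, u a = v a + k * log (u a) + r a) :
    Tendsto (fun a => u a / v a) l (𝓝 1) := by
  have hlog : (fun a => k * log (u a)) =o[l] u :=
    (isLittleO_log_id_atTop.comp_tendsto hu).const_mul_left k
  have hr' : r =o[l] u := (hr.isBigO_one ℝ).trans_isLittleO
    ((isLittleO_one_left_iff ℝ).mpr (tendsto_norm_atTop_atTop.comp hu))
  have hvu : v ~[l] u := by
    refine (hlog.add hr').neg_left.congr' ?_ EventuallyEq.rfl
    filter_upwards [h] with a ha
    simp only [Pi.sub_apply]
    linarith
  have hv : Tendsto v l atTop := hvu.symm.tendsto_atTop hu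
  exact (isEquivalent_iff_tendsto_one (hv.eventually_ne_atTop 0)).mp hvu.symm

lemma exp_eq_of_saddle_eq {x t : ℝ} (ht : 0 < t)
    (h : (exp t - 1 - 3 * t) / (2 * t ^ 2) = x) : exp t = 2 * x * t ^ 2 + 1 + 3 * t := by
  rw [div_eq_iff (by positivity)] at h
  linarith

lemma eq_log_add_two_mul_log_of_exp_eq {x t : ℝ} (hx : 0 < x) (ht : 0 < t)
    (h : exp t = 2 * x * t ^ 2 + 1 + 3 * t) :
    t = log x + 2 * log t + (log 2 + log (1 + (1 + 3 * t) / (2 * x * t ^ 2))) := by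
  have hfactor : exp t = 2 * x * t ^ 2 * (1 + (1 + 3 * t) / (2 * x * t ^ 2)) := by
    rw [h]; field_simp; ring
  have hlog := congrArg log hfactor
  rw [log_exp, log_mul (by positivity) (by positivity), log_mul (by positivity) (by positivity),
    log_mul (by positivity) (by positivity), log_pow] at hlog
  push_cast at hlog
  linarith

lemma tendsto_log_one_add_saddle_correction {c : ℝ → ℝ} (hc : ∀ᶠ x in atTop, 1 ≤ c x) :
    Tendsto (fun x => log (1 + (1 + 3 * c x) / (2 * x * c x ^ 2))) atTop (𝓝 0) := by
  have hbound : ∀ᶠ x in atTop, 0 ≤ (1 + 3 * c x) / (2 * x * c x ^ 2) ∧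
      (1 + 3 * c x) / (2 * x * c x ^ 2) ≤ 2 / x := by
    filter_upwards [hc, eventually_gt_atTop 0] with x hcx hx
    refine ⟨by positivity, ?_⟩
    rw [div_le_div_iff₀ (by positivity) hx]
    nlinarith [mul_le_mul_of_nonneg_left hcx hx.le]
  have hd : Tendsto (fun x => (1 + 3 * c x) / (2 * x * c x ^ 2)) atTop (𝓝 0) :=
    tendsto_of_tendsto_of_tendsto_of_le_of_le' tendsto_const_nhds
      (tendsto_const_nhds.div_atTop tendsto_id) (hbound.mono fun _ => And.left)
      (hbound.mono fun _ => And.right)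
  simpa using (hd.const_add 1).log (by norm_num)

/-- If `c(x)` solves the saddle point equation `(e^c - 1 - 3c)/(2c²) = x` for
large `x`, then `c(x) = log x + 2 log log x + log 2 + o(1)` as `x → ∞`. -/
theorem stmt15 (c : ℝ → ℝ)
    (hc : ∀ᶠ x in atTop, 0 < c x ∧
      (Real.exp (c x) - 1 - 3 * c x) / (2 * (c x) ^ 2) = x) :
    Tendsto (fun x => c x - (Real.log x + 2 * Real.log (Real.log x) + Real.log 2))
      atTop (nhds 0) := by
  have hsol : ∀ᶠ x in atTop, 0 < x ∧ 0 < c x ∧ exp (c x) = 2 * x * c x ^ 2 + 1 + 3 * c x := by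
    filter_upwards [hc, eventually_gt_atTop 0] with x ⟨hcx, heq⟩ hx
    exact ⟨hx, hcx, exp_eq_of_saddle_eq hcx heq⟩
  have hc_one : ∀ᶠ x in atTop, 1 ≤ c x := by
    filter_upwards [hsol, eventually_ge_atTop (1 / 2)] with x ⟨_, hcx, hexp⟩ hx
    exact (one_lt_of_one_add_two_mul_lt_exp hcx (by nlinarith)).le
  have hc_top : Tendsto c atTop atTop := by
    refine tendsto_atTop_mono' _ ?_ tendsto_log_atTop
    filter_upwards [hsol, hc_one] with x ⟨hx, _, hexp⟩ hcx
    rw [log_le_iff_le_exp hx]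
    nlinarith [one_le_pow₀ (n := 2) hcx]
  have hcorr := tendsto_log_one_add_saddle_correction hc_one
  have hratio : Tendsto (fun x => c x / log x) atTop (𝓝 1) :=
    tendsto_div_one_of_eq_add_mul_log hc_top (hcorr.const_add (log 2))
      (hsol.mono fun _ ⟨hx, hcx, hexp⟩ => eq_log_add_two_mul_log_of_exp_eq hx hcx hexp)
  have hlim : Tendsto (fun x => 2 * log (c x / log x) +
      log (1 + (1 + 3 * c x) / (2 * x * c x ^ 2))) atTop (𝓝 0) := by
    simpa using ((hratio.log one_ne_zero).const_mul 2).add hcorr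
  refine hlim.congr' ?_
  filter_upwards [hsol, eventually_gt_atTop 1] with x ⟨hx, hcx, hexp⟩ hx1
  have hid := eq_log_add_two_mul_log_of_exp_eq hx hcx hexp
  rw [log_div hcx.ne' (log_pos hx1).ne']
  linarith
end

section
/- With c = c(x) satisfying (e^c − 1 − 3c)/(2c²) = x and ξ(z) = K(z) − log z where K(z) = ∫_0^z (e^y−1−y)/(2y²) dy, one has e^{−xc + ξ(c)} = x^{−x} (log x)^{−2x} (e/2)^{x + o(x)} as x → ∞. -/
/-!
`K` is compared with `F z = e^z / (2z²)` through derivatives: `K' - F' = o(F')` with `F' ≥ 0`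
and `F → ∞`, and a fencing argument upgrades this to `K - F = o(F)`. The saddle-point equation
reads `F(c) = x + (1 + 3c)/(2c²) = x + O(1)`, so `K(c) = x + o(x)`; taking logarithms,
`c = log x + 2 log c + log 2 + o(1)`, which first forces `c ~ log x` and then
`c = log x + 2 log log x + log 2 + o(1)`. Substituting into `-xc + K(c) - log c` gives the claim.
-/

open Filter Real Asymptotics

noncomputable def ξ (z : ℝ) : ℝ := K z - Real.log z

open Set MeasureTheory Topology

theorem Asymptotics.IsLittleO.of_hasDerivAt_atTop {E : Type*} [NormedAddCommGroup E]
    [NormedSpace ℝ E] {f f' : ℝ → E} {g g' : ℝ → ℝ}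
    (hf : ∀ᶠ x in atTop, HasDerivAt f (f' x) x) (hg : ∀ᶠ x in atTop, HasDerivAt g (g' x) x)
    (hg' : ∀ᶠ x in atTop, 0 ≤ g' x) (hgtop : Tendsto g atTop atTop) (h : f' =o[atTop] g') :
    f =o[atTop] g := by
  refine isLittleO_iff.2 fun ε hε => ?_
  obtain ⟨b, hb⟩ := eventually_atTop.1
    (hf.and <| hg.and <| hg'.and <| isLittleO_iff.1 h (half_pos hε))
  have hfence : ∀ x, b ≤ x → ‖f x - f b‖ ≤ ε / 2 * (g x - g b) := by
    intro x hbx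
    have hcont : ∀ y ∈ Icc b x, ContinuousWithinAt f (Icc b x) y ∧
        ContinuousWithinAt g (Icc b x) y := fun y hy =>
      ⟨(hb y hy.1).1.continuousAt.continuousWithinAt,
        (hb y hy.1).2.1.continuousAt.continuousWithinAt⟩
    refine image_norm_le_of_norm_deriv_right_le_deriv_boundary' (f := fun y => f y - f b)
      (B := fun y => ε / 2 * (g y - g b)) (f' := f') (B' := fun y => ε / 2 * g' y)
      (fun y hy => ((hcont y hy).1.sub continuousWithinAt_const))
      (fun y hy => ((hb y hy.1).1.sub_const (f b)).hasDerivWithinAt)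
      (by simp) (fun y hy => ((hcont y hy).2.sub continuousWithinAt_const).const_mul _)
      (fun y hy => (((hb y hy.1).2.1.sub_const (g b)).const_mul (ε / 2)).hasDerivWithinAt)
      (fun y hy => ?_) ⟨hbx, le_rfl⟩
    obtain ⟨-, -, hnn, hle⟩ := hb y hy.1
    simpa [Real.norm_of_nonneg hnn] using hle
  filter_upwards [eventually_ge_atTop b,
    hgtop.eventually_ge_atTop (2 / ε * ‖f b‖ + |g b|)] with x hbx hgx
  have hgx0 : 0 ≤ g x := le_trans (by positivity) hgx
  have hconst : ε / 2 * (2 / ε * ‖f b‖ + |g b|) = ‖f b‖ + ε / 2 * |g b| := by field_simp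
  rw [Real.norm_of_nonneg hgx0]
  calc ‖f x‖ ≤ ‖f b‖ + ‖f x - f b‖ := norm_le_norm_add_norm_sub' _ _
    _ ≤ ‖f b‖ + ε / 2 * (g x - g b) := by grw [hfence x hbx]
    _ ≤ ε * g x := by
      nlinarith [neg_abs_le (g b), mul_le_mul_of_nonneg_left hgx (half_pos hε).le]

lemma intervalIntegrable_K_integrand_zero_one :
    IntervalIntegrable (fun y => (exp y - 1 - y) / (2 * y ^ 2)) volume 0 1 := by
  rw [intervalIntegrable_iff, uIoc_of_le zero_le_one]
  refine Measure.integrableOn_of_bounded (M := 1 / 2) (by simp)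
    (Measurable.aestronglyMeasurable (by fun_prop)) ?_
  filter_upwards [ae_restrict_mem measurableSet_Ioc] with y ⟨hy0, hy1⟩
  have hy : |y| ≤ 1 := by rw [abs_of_pos hy0]; exact hy1
  rw [norm_div, Real.norm_eq_abs, Real.norm_of_nonneg (by positivity),
    div_le_iff₀ (by positivity)]
  linarith [abs_exp_sub_one_sub_id_le hy]

lemma hasDerivAt_K {z : ℝ} (hz : 0 < z) :
    HasDerivAt K ((exp z - 1 - z) / (2 * z ^ 2)) z := by
  have hcont : ContinuousOn (fun y => (exp y - 1 - y) / (2 * y ^ 2)) (Ioi 0) :=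
    ContinuousOn.div (by fun_prop) (by fun_prop) fun y (hy : 0 < y) => by positivity
  exact intervalIntegral.integral_hasDerivAt_right
    (intervalIntegrable_K_integrand_zero_one.trans <| (hcont.mono fun y hy =>
      lt_of_lt_of_le (lt_min one_pos hz) hy.1).intervalIntegrable)
    (hcont.stronglyMeasurableAtFilter isOpen_Ioi z hz) (hcont.continuousAt (Ioi_mem_nhds hz))

lemma hasDerivAt_exp_div_two_mul_sq {z : ℝ} (hz : z ≠ 0) :
    HasDerivAt (fun y => exp y / (2 * y ^ 2)) (exp z * (z - 2) / (2 * z ^ 3)) z := by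
  refine ((hasDerivAt_exp z).div ((hasDerivAt_pow 2 z).const_mul 2)
    (by positivity)).congr_deriv ?_
  field_simp
  ring

lemma K_integrand_sub_isLittleO :
    (fun z => (exp z - 1 - z) / (2 * z ^ 2) - exp z * (z - 2) / (2 * z ^ 3))
      =o[atTop] fun z => exp z * (z - 2) / (2 * z ^ 3) := by
  have hnum : Tendsto (fun z => 2 - (z ^ 2 * exp (-z) + z ^ 1 * exp (-z))) atTop (𝓝 2) := by
    simpa using tendsto_const_nhds.sub ((tendsto_pow_mul_exp_neg_atTop_nhds_zero 2).add
      (tendsto_pow_mul_exp_neg_atTop_nhds_zero 1))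
  refine (isLittleO_iff_tendsto' ?_).2 <| (hnum.div_atTop (tendsto_atTop_add_const_right _ (-2)
    tendsto_id)).congr' ?_
  · filter_upwards [eventually_gt_atTop 2] with z hz h
    have : 0 < exp z * (z - 2) / (2 * z ^ 3) := by
      have : 0 < z - 2 := by linarith
      positivity
    exact absurd h this.ne'
  · filter_upwards [eventually_gt_atTop 2] with z hz
    have : z + -2 ≠ 0 := by linarith
    simp only [id, exp_neg]
    field_simp
    ring

lemma isEquivalent_K : K ~[atTop] fun z => exp z / (2 * z ^ 2) :=
  IsLittleO.of_hasDerivAt_atTop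
    (f' := fun z => (exp z - 1 - z) / (2 * z ^ 2) - exp z * (z - 2) / (2 * z ^ 3))
    (by filter_upwards [eventually_gt_atTop 0] with z hz
        exact (hasDerivAt_K hz).sub (hasDerivAt_exp_div_two_mul_sq hz.ne'))
    (by filter_upwards [eventually_gt_atTop 0] with z hz
        exact hasDerivAt_exp_div_two_mul_sq hz.ne')
    (by filter_upwards [eventually_ge_atTop 2] with z hz
        have : 0 ≤ z - 2 := by linarith
        positivity)
    ((tendsto_exp_div_pow_atTop 2).atTop_div_const two_pos |>.congr fun z => by ring)
    K_integrand_sub_isLittleO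

theorem Asymptotics.IsEquivalent.tendsto_log_div {α : Type*} {l : Filter α} {u v : α → ℝ}
    (h : u ~[l] v) (hv : ∀ᶠ x in l, v x ≠ 0) :
    Tendsto (fun x => Real.log (u x / v x)) l (𝓝 0) := by
  have := (continuousAt_log one_ne_zero).tendsto.comp ((isEquivalent_iff_tendsto_one hv).1 h)
  rwa [log_one] at this

lemma log_lt_of_saddle {x z : ℝ} (hz : 0 < z) (hx : 1 ≤ x)
    (h : (exp z - 1 - 3 * z) / (2 * z ^ 2) = x) : log x < z := by
  rw [div_eq_iff (by positivity)] at h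
  have hz1 : 1 < z := by
    by_contra! hz1
    have := abs_exp_sub_one_sub_id_le (abs_le.2 ⟨by linarith, hz1⟩)
    nlinarith [le_abs_self (exp z - 1 - z)]
  rw [log_lt_iff_lt_exp (by linarith)]
  nlinarith [mul_le_mul_of_nonneg_left (by nlinarith : (1 : ℝ) ≤ 2 * z ^ 2)
    (by linarith : 0 ≤ x)]

lemma eq_log_add_log_exp_div {x z : ℝ} (hx : 0 < x) (hz : 0 < z) :
    z = log x + 2 * log z + log 2 + log (exp z / (2 * z ^ 2) / x) := by
  rw [log_div (by positivity) hx.ne', log_div (by positivity) (by positivity), log_exp,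
    log_mul two_ne_zero (by positivity), log_pow]
  push_cast
  ring

section Saddle

variable {c : ℝ → ℝ}
  (hc : ∀ᶠ x in atTop, 0 < c x ∧ (exp (c x) - 1 - 3 * c x) / (2 * c x ^ 2) = x)
include hc

lemma saddle_tendsto_atTop : Tendsto c atTop atTop :=
  tendsto_atTop_mono' _ (by
    filter_upwards [hc, eventually_ge_atTop 1] with x ⟨hpos, heq⟩ hx
    exact (log_lt_of_saddle hpos hx heq).le) tendsto_log_atTop

lemma saddle_exp_div_isEquivalent : (fun x => exp (c x) / (2 * c x ^ 2)) ~[atTop] id := by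
  refine IsBigO.trans_isLittleO (g := fun _ => (1 : ℝ)) (IsBigO.of_bound 2 ?_)
    (isLittleO_const_id_atTop 1)
  filter_upwards [hc, (saddle_tendsto_atTop hc).eventually_ge_atTop 1] with x ⟨_, heq⟩ hc1
  have : exp (c x) / (2 * c x ^ 2) - x = (1 + 3 * c x) / (2 * c x ^ 2) := by
    linear_combination heq
  simp only [Pi.sub_apply, id, this, norm_one, mul_one]
  rw [Real.norm_of_nonneg (by positivity), div_le_iff₀ (by positivity)]
  nlinarith

lemma saddle_eventually_eq_log_add : ∀ᶠ x in atTop,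
    c x = log x + 2 * log (c x) + log 2 + log (exp (c x) / (2 * c x ^ 2) / x) := by
  filter_upwards [hc, eventually_gt_atTop 0] with x ⟨hpos, _⟩ hx
  exact eq_log_add_log_exp_div hx hpos

lemma saddle_isEquivalent_log : c ~[atTop] log := by
  have hct := saddle_tendsto_atTop hc
  have hrem := ((saddle_exp_div_isEquivalent hc).tendsto_log_div (eventually_ne_atTop 0))
  have h : (fun x => 2 * log (c x) + log 2 + log (exp (c x) / (2 * c x ^ 2) / x)) =o[atTop] c :=
    ((((isLittleO_log_id_atTop.comp_tendsto hct).const_mul_left 2).add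
      ((isLittleO_const_id_atTop (log 2)).comp_tendsto hct)).add
      (((isLittleO_one_iff ℝ).2 hrem).trans ((isLittleO_const_id_atTop 1).comp_tendsto hct)))
  refine (IsLittleO.isEquivalent ?_).symm
  refine h.neg_left.congr' ?_ EventuallyEq.rfl
  filter_upwards [saddle_eventually_eq_log_add hc] with x hx
  simp only [Pi.sub_apply]
  linarith

lemma saddle_tendsto_sub_log :
    Tendsto (fun x => c x - log x - 2 * log (log x) - log 2) atTop (𝓝 0) := by
  have h := ((saddle_isEquivalent_log hc).tendsto_log_div
    (tendsto_log_atTop.eventually_ne_atTop 0)).const_mul 2 |>.add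
    ((saddle_exp_div_isEquivalent hc).tendsto_log_div (eventually_ne_atTop 0))
  rw [mul_zero, add_zero] at h
  refine h.congr' ?_
  filter_upwards [saddle_eventually_eq_log_add hc, hc, tendsto_log_atTop.eventually_gt_atTop 0]
    with x hx ⟨hpos, _⟩ hlog
  rw [log_div hpos.ne' hlog.ne', id]
  linarith

end Saddle

/-- With `c(x)` the saddle point, `e^{-xc + ξ(c)} = x^{-x} (log x)^{-2x} (e/2)^{x+o(x)}`,
i.e. `log (e^{-xc+ξ(c)}) = -x log x - 2x log log x + x(1 - log 2) + o(x)`. -/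
theorem stmt16 (c : ℝ → ℝ)
    (hc : ∀ᶠ x in atTop, 0 < c x ∧
      (Real.exp (c x) - 1 - 3 * c x) / (2 * (c x) ^ 2) = x) :
    (fun x => (-(x * c x) + ξ (c x))
        - (-(x * Real.log x) - 2 * x * Real.log (Real.log x)
            + x * (1 - Real.log 2)))
      =o[atTop] fun x => x := by
  have hct := saddle_tendsto_atTop hc
  have hK : (fun x => K (c x)) ~[atTop] id :=
    (isEquivalent_K.comp_tendsto hct).trans (saddle_exp_div_isEquivalent hc)
  have hlogc : (fun x => log (c x)) =o[atTop] fun x => x :=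
    (isLittleO_log_id_atTop.comp_tendsto hct).trans
      ((saddle_isEquivalent_log hc).isBigO.trans_isLittleO isLittleO_log_id_atTop)
  have hmain : (fun x => x * (c x - log x - 2 * log (log x) - log 2)) =o[atTop] fun x => x := by
    simpa using (isBigO_refl (fun x : ℝ => x) atTop).mul_isLittleO
      ((isLittleO_one_iff ℝ).2 (saddle_tendsto_sub_log hc))
  refine ((hmain.neg_left.add hK.isLittleO).sub hlogc).congr_left fun x => ?_
  simp only [ξ, Pi.sub_apply, id]
  ring
end
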